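/- arXiv:1706.09146 — 2 statements merged into one kernel-verified Lean document; each statement's English description precedes it below -/
import Mathlib

section
/- Let α be a primitive element of GF(2^s) satisfying an irreducible polynomial of degree s over GF(2), and for 0 ≤ j ≤ s let M_j ⊆ GF(2^s) be the GF(2)-span of {1, α, ..., α^{j−1}}. If j divides s and h_1 = α^{t_1·j}, h_2 = α^{t_2·j} with 0 ≤ t_1 < t_2 ≤ s/j − 1, then h_1·M_j ∩ h_2·M_j = {0}. -/
/-!
Multiplying by `α^(t j)` carries `M_j` onto the span of the window `α^(t j), …, α^(t j + j - 1)`.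
For `t₁ < t₂ ≤ s/j - 1` the two windows are disjoint and lie among `1, α, …, α^(s-1)`, which are
linearly independent, so their spans meet only in `0`.
-/

open Submodule Set

-- The `ZMod n`-module structure on `R` is arbitrary, but left multiplication is additive and
-- hence `ZMod n`-linear.
theorem image_mul_left_span {R : Type*} [Ring R] {n : ℕ} [Module (ZMod n) R] (a : R) (S : Set R) :
    (a * ·) '' (span (ZMod n) S : Set R) = span (ZMod n) ((a * ·) '' S) := by
  have h := map_span ((AddMonoidHom.mulLeft a).toZModLinearMap n) S
  exact congrArg SetLike.coe h

theorem image_mul_pow_span_range_pow {R : Type*} [Ring R] {n : ℕ} [Module (ZMod n) R]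
    (α : R) (k j : ℕ) :
    (α ^ k * ·) '' (span (ZMod n) (range fun i : Fin j => α ^ (i : ℕ)) : Set R) =
      span (ZMod n) (range fun i : Fin j => α ^ (k + i)) := by
  rw [image_mul_left_span, ← range_comp]
  simp only [Function.comp_def, pow_add]

theorem disjoint_span_windows {K M : Type*} [Ring K] [AddCommGroup M] [Module K M]
    {v : ℕ → M} {s : ℕ} (hv : LinearIndependent K fun i : Fin s => v i)
    {j k₁ k₂ : ℕ} (h₁₂ : k₁ + j ≤ k₂) (h₂ : k₂ + j ≤ s) :
    Disjoint (span K (range fun i : Fin j => v (k₁ + i)))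
      (span K (range fun i : Fin j => v (k₂ + i))) := by
  let f₁ : Fin j → Fin s := fun i => ⟨k₁ + i, by omega⟩
  let f₂ : Fin j → Fin s := fun i => ⟨k₂ + i, by omega⟩
  have hdisj : Disjoint (range f₁) (range f₂) := by
    rw [disjoint_iff_forall_ne]
    rintro _ ⟨i₁, rfl⟩ _ ⟨i₂, rfl⟩ h
    have := congrArg Fin.val h
    simp only [f₁, f₂] at this
    omega
  have h := hv.disjoint_span_image hdisj
  rwa [← range_comp, ← range_comp] at h

theorem stmt7_general {s j : ℕ} {F : Type*} [Field F] [Module (ZMod 2) F] (α : F)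
    (hα : LinearIndependent (ZMod 2) fun i : Fin s => α ^ (i : ℕ))
    (t₁ t₂ : ℕ) (h12 : t₁ < t₂) (h2 : t₂ ≤ s / j - 1) :
    ((fun m => α ^ (t₁ * j) * m) ''
        (Submodule.span (ZMod 2) (Set.range fun i : Fin j => α ^ (i : ℕ)) : Set F)) ∩
      ((fun m => α ^ (t₂ * j) * m) ''
        (Submodule.span (ZMod 2) (Set.range fun i : Fin j => α ^ (i : ℕ)) : Set F)) =
      {0} := by
  have hsep : t₁ * j + j ≤ t₂ * j := by
    simpa [Nat.succ_mul] using Nat.mul_le_mul_right j (Nat.succ_le_of_lt h12)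
  have hfit : t₂ * j + j ≤ s :=
    calc t₂ * j + j = (t₂ + 1) * j := (Nat.succ_mul t₂ j).symm
      _ ≤ s / j * j := Nat.mul_le_mul_right j (by omega)
      _ ≤ s := Nat.div_mul_le_self s j
  have hdisj := disjoint_span_windows (v := (α ^ ·)) hα hsep hfit
  rw [image_mul_pow_span_range_pow, image_mul_pow_span_range_pow, ← coe_inf,
    disjoint_iff.mp hdisj, bot_coe]

/-- With `α` of degree `s` over GF(2) (the powers `α^0,...,α^{s-1}` are linearly
independent over GF(2)), `M_j` the GF(2)-span of `{1, α, ..., α^{j−1}}`, `j ∣ s`, and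
labels `h₁ = α^{t₁·j}`, `h₂ = α^{t₂·j}` with `t₁ < t₂ ≤ s/j − 1`, we have
`h₁·M_j ∩ h₂·M_j = {0}`. -/
theorem stmt7 {s j : ℕ} {F : Type*} [Field F] [Module (ZMod 2) F] (α : F)
    (hα : LinearIndependent (ZMod 2) fun i : Fin s => α ^ (i : ℕ))
    (hjs : j ∣ s) (t₁ t₂ : ℕ) (h12 : t₁ < t₂) (h2 : t₂ ≤ s / j - 1) :
    ((fun m => α ^ (t₁ * j) * m) ''
        (Submodule.span (ZMod 2) (Set.range fun i : Fin j => α ^ (i : ℕ)) : Set F)) ∩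
      ((fun m => α ^ (t₂ * j) * m) ''
        (Submodule.span (ZMod 2) (Set.range fun i : Fin j => α ^ (i : ℕ)) : Set F)) =
      {0} :=
  stmt7_general α hα t₁ t₂ h12 h2
end

section
/- The capacity of the q-ary multi-bit channel with q = 2^s and partial-erasure probabilities ε_0, ε_1, ..., ε_s (summing to 1) is 1 − ∑_{j=1}^{s} j·ε_j/s, measured in q-ary symbols per channel use, and it is achieved by the uniform input distribution. -/
/-!
Write `B_j = ⌊X / 2^j⌋` for the index of the size-`2^j` block containing the input. An output of
erasure type `j` reveals exactly `j` and `B_j`, and `j` is independent of `X`, so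
`I(X;Y) = ∑_j ε_j H(B_j)`. Since `B_j` takes `2^(s-j)` values, `H(B_j) ≤ s - j` bits, with
equality for every `j` simultaneously when `X` is uniform.
-/

/-- The QMBC transition kernel: on input `x ∈ {0,...,2^s−1}`, with probability `ε j`
the output is the partial-erasure set `M_x^j`, encoded as the pair `(j, ⌊x/2^j⌋·2^j)`
consisting of the erasure type and the smallest element of the set. -/
noncomputable def qmbcW (s : ℕ) (ε : Fin (s + 1) → ℝ)
    (x : Fin (2 ^ s)) (y : Fin (s + 1) × Fin (2 ^ s)) : ℝ :=
  if (y.2 : ℕ) = (x : ℕ) / 2 ^ (y.1 : ℕ) * 2 ^ (y.1 : ℕ) then ε y.1 else 0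

/-- Mutual information (in bits) between the input, distributed according to `p`, and
the output of the QMBC. -/
noncomputable def qmbcI (s : ℕ) (ε : Fin (s + 1) → ℝ) (p : Fin (2 ^ s) → ℝ) : ℝ :=
  ∑ x, ∑ y, p x * qmbcW s ε x y *
    Real.logb 2 (qmbcW s ε x y / ∑ x', p x' * qmbcW s ε x' y)

open Finset Real

theorem Fin.card_filter_div_eq {N n k : ℕ} (hn : 0 < n) (h : (k + 1) * n ≤ N) :
    #{x : Fin N | (x : ℕ) / n = k} = n := by
  have hval : ({x : Fin N | (x : ℕ) / n = k} : Finset (Fin N)).map valEmbedding =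
      {x ∈ Iio N | x / n = k} := by
    rw [← Fin.map_valEmbedding_univ, filter_map]
    rfl
  have hblock : {x ∈ Iio N | x / n = k} = Ico (k * n) (k * n + n) := by
    ext x
    simp only [mem_filter, mem_Iio, mem_Ico, Nat.div_eq_iff hn]
    rw [add_mul, one_mul] at h
    omega
  rw [← card_map, hval, hblock, Nat.card_Ico, Nat.add_sub_cancel_left]

theorem sum_negMulLog_le_log_card {ι : Type*} {T : Finset ι} {P : ι → ℝ}
    (h0 : ∀ i ∈ T, 0 ≤ P i) (h1 : ∑ i ∈ T, P i = 1) :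
    ∑ i ∈ T, negMulLog (P i) ≤ log #T := by
  have hT : (0 : ℝ) < #T := by
    rcases T.eq_empty_or_nonempty with rfl | hne
    · simp at h1
    · exact_mod_cast hne.card_pos
  have jensen := concaveOn_negMulLog.le_map_sum (t := T) (w := fun _ => (#T : ℝ)⁻¹) (p := P)
    (fun _ _ => by positivity) (by simp [hT.ne']) h0
  simp only [smul_eq_mul, ← mul_sum, h1, mul_one, negMulLog, log_inv, neg_mul_neg] at jensen
  exact le_of_mul_le_mul_left jensen (inv_pos.mpr hT)

section Blocks

variable {N : ℕ}

def blockMass (p : Fin N → ℝ) (n k : ℕ) : ℝ :=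
  ∑ x ∈ {x : Fin N | (x : ℕ) / n = k}, p x

variable {p : Fin N → ℝ} {n m : ℕ}

theorem sum_mul_apply_div_eq_sum_blockMass (hN : N ≤ m * n) (g : ℕ → ℝ) :
    ∑ x, p x * g (x / n) = ∑ k ∈ range m, blockMass p n k * g k := by
  have hmaps : ∀ x ∈ (univ : Finset (Fin N)), (x : ℕ) / n ∈ range m := fun x _ =>
    mem_range.2 <| Nat.div_lt_of_lt_mul <| (x.2.trans_le hN).trans_eq (mul_comm m n)
  rw [← sum_fiberwise_of_maps_to hmaps]
  refine sum_congr rfl fun k _ => ?_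
  rw [blockMass, sum_mul]
  exact sum_congr rfl fun x hx => by rw [(mem_filter.1 hx).2]

theorem sum_blockMass (hN : N ≤ m * n) : ∑ k ∈ range m, blockMass p n k = ∑ x, p x := by
  simpa using (sum_mul_apply_div_eq_sum_blockMass (p := p) hN fun _ => 1).symm

theorem blockMass_nonneg (hp : ∀ x, 0 ≤ p x) (k : ℕ) : 0 ≤ blockMass p n k :=
  sum_nonneg fun x _ => hp x

theorem blockMass_const (c : ℝ) {k : ℕ} (hn : 0 < n) (h : (k + 1) * n ≤ N) :
    blockMass (fun _ : Fin N => c) n k = n * c := by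
  rw [blockMass, sum_const, Fin.card_filter_div_eq hn h, nsmul_eq_mul]

end Blocks

section Channel

variable {s : ℕ} (ε : Fin (s + 1) → ℝ)

def blockStart (j : ℕ) (x : Fin (2 ^ s)) : Fin (2 ^ s) :=
  ⟨x / 2 ^ j * 2 ^ j, (Nat.div_mul_le_self _ _).trans_lt x.2⟩

theorem blockStart_eq_blockStart_iff {j : ℕ} {x x' : Fin (2 ^ s)} :
    blockStart j x = blockStart j x' ↔ (x : ℕ) / 2 ^ j = x' / 2 ^ j := by
  rw [blockStart, blockStart, Fin.mk.injEq, Nat.mul_left_inj (by positivity)]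

theorem qmbcW_eq_ite (x : Fin (2 ^ s)) (j : Fin (s + 1)) (m : Fin (2 ^ s)) :
    qmbcW s ε x (j, m) = if m = blockStart j x then ε j else 0 := by
  simp only [qmbcW, blockStart, Fin.ext_iff]

theorem sum_mul_qmbcW_blockStart (p : Fin (2 ^ s) → ℝ) (j : Fin (s + 1)) (x : Fin (2 ^ s)) :
    ∑ x', p x' * qmbcW s ε x' (j, blockStart j x) =
      ε j * blockMass p (2 ^ (j : ℕ)) (x / 2 ^ (j : ℕ)) := by
  simp only [qmbcW_eq_ite, blockStart_eq_blockStart_iff, blockMass, mul_sum, sum_filter]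
  refine sum_congr rfl fun x' _ => ?_
  split_ifs <;> simp_all [mul_comm]

theorem sum_qmbcI_summand_eq (p : Fin (2 ^ s) → ℝ) (j : Fin (s + 1)) (x : Fin (2 ^ s)) :
    ∑ m, p x * qmbcW s ε x (j, m) *
        logb 2 (qmbcW s ε x (j, m) / ∑ x', p x' * qmbcW s ε x' (j, m)) =
      ε j * (p x * logb 2 (blockMass p (2 ^ (j : ℕ)) (x / 2 ^ (j : ℕ)))⁻¹) := by
  rw [Fintype.sum_eq_single (blockStart j x) fun m hm => by simp [qmbcW_eq_ite, hm],
    sum_mul_qmbcW_blockStart, qmbcW_eq_ite, if_pos rfl]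
  rcases eq_or_ne (ε j) 0 with h | h
  · simp [h]
  · rw [div_mul_cancel_left₀ h]
    ring

theorem qmbcI_eq_sum_entropy (p : Fin (2 ^ s) → ℝ) :
    qmbcI s ε p = (∑ j : Fin (s + 1),
      ε j * ∑ k ∈ range (2 ^ (s - j)), negMulLog (blockMass p (2 ^ (j : ℕ)) k)) / log 2 := by
  simp only [qmbcI, Fintype.sum_prod_type]
  rw [sum_comm, sum_div]
  refine sum_congr rfl fun j _ => ?_
  simp only [sum_qmbcI_summand_eq, ← mul_sum]
  rw [sum_mul_apply_div_eq_sum_blockMass (pow_sub_mul_pow 2 j.is_le).ge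
    fun k => logb 2 (blockMass p (2 ^ (j : ℕ)) k)⁻¹, mul_div_assoc, sum_div]
  congr 1
  refine sum_congr rfl fun k _ => ?_
  rw [negMulLog, logb, log_inv]
  ring

theorem qmbcI_le (hε : ∀ j, 0 ≤ ε j) {p : Fin (2 ^ s) → ℝ} (hp0 : ∀ x, 0 ≤ p x)
    (hp1 : ∑ x, p x = 1) : qmbcI s ε p ≤ ∑ j : Fin (s + 1), ε j * ((s : ℝ) - j) := by
  rw [qmbcI_eq_sum_entropy, div_le_iff₀ (log_pos one_lt_two), sum_mul]
  refine sum_le_sum fun j _ => ?_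
  rw [mul_assoc]
  refine mul_le_mul_of_nonneg_left ?_ (hε j)
  calc ∑ k ∈ range (2 ^ (s - j)), negMulLog (blockMass p (2 ^ (j : ℕ)) k)
      ≤ log #(range (2 ^ (s - j))) :=
        sum_negMulLog_le_log_card (fun k _ => blockMass_nonneg hp0 k)
          (by rw [sum_blockMass (pow_sub_mul_pow 2 j.is_le).ge, hp1])
    _ = (s - j) * log 2 := by
        rw [card_range, Nat.cast_pow, log_pow, Nat.cast_sub j.is_le, Nat.cast_ofNat]

theorem qmbcI_uniform :
    qmbcI s ε (fun _ => 1 / 2 ^ s) = ∑ j : Fin (s + 1), ε j * ((s : ℝ) - j) := by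
  rw [qmbcI_eq_sum_entropy, div_eq_iff (log_pos one_lt_two).ne', sum_mul]
  refine sum_congr rfl fun j _ => ?_
  have hmass : ∀ k ∈ range (2 ^ (s - j)),
      blockMass (fun _ : Fin (2 ^ s) => (1 : ℝ) / 2 ^ s) (2 ^ (j : ℕ)) k =
        ((2 : ℝ) ^ (s - j))⁻¹ := by
    intro k hk
    have hk' : (k + 1) * 2 ^ (j : ℕ) ≤ 2 ^ s :=
      (Nat.mul_le_mul_right _ (mem_range.1 hk)).trans (pow_sub_mul_pow 2 j.is_le).le
    rw [blockMass_const _ (by positivity) hk', Nat.cast_pow, Nat.cast_ofNat,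
      ← pow_sub_mul_pow (2 : ℝ) j.is_le]
    field_simp
  rw [sum_congr rfl fun k hk => by rw [hmass k hk], sum_const, card_range, nsmul_eq_mul,
    negMulLog, log_inv, log_pow, Nat.cast_sub j.is_le, Nat.cast_pow, Nat.cast_ofNat]
  field_simp

end Channel

/-- The capacity of the QMBC with `q = 2^s` and partial-erasure probabilities
`ε_0,...,ε_s` is `1 − ∑_{j=1}^{s} j·ε_j/s`, measured in `q`-ary symbols per channel
use (i.e. mutual information in bits normalized by `s`), and it is achieved by the
uniform input distribution. -/
theorem stmt14 {s : ℕ} (hs : 0 < s) (ε : Fin (s + 1) → ℝ)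
    (hε0 : ∀ j, 0 ≤ ε j) (hε1 : ∑ j, ε j = 1) :
    IsGreatest
      {c : ℝ | ∃ p : Fin (2 ^ s) → ℝ,
        (∀ x, 0 ≤ p x) ∧ ∑ x, p x = 1 ∧ c = qmbcI s ε p / s}
      (1 - (∑ j : Fin (s + 1), (j : ℝ) * ε j) / s) ∧
    qmbcI s ε (fun _ => 1 / 2 ^ s) / s =
      1 - (∑ j : Fin (s + 1), (j : ℝ) * ε j) / s := by
  have hcapacity :
      ∑ j : Fin (s + 1), ε j * ((s : ℝ) - j) = s - ∑ j : Fin (s + 1), (j : ℝ) * ε j := by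
    rw [← sum_congr rfl fun j _ => (by ring : s * ε j - j * ε j = ε j * ((s : ℝ) - j)),
      sum_sub_distrib, ← mul_sum, hε1, mul_one]
  have huniform :
      qmbcI s ε (fun _ => 1 / 2 ^ s) / s = 1 - (∑ j : Fin (s + 1), (j : ℝ) * ε j) / s := by
    rw [qmbcI_uniform, hcapacity, sub_div, div_self (by positivity)]
  refine ⟨⟨⟨fun _ => 1 / 2 ^ s, fun _ => by positivity, by simp, huniform.symm⟩, ?_⟩,
    huniform⟩
  rintro c ⟨p, hp0, hp1, rfl⟩
  rw [← huniform, qmbcI_uniform]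
  gcongr
  exact qmbcI_le ε hε0 hp0 hp1
end
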